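/- arXiv:2112.01604 — 9 statements merged into one kernel-verified Lean document; each statement's English description precedes it below -/
import Mathlib

section
/- Let K_vco, τ₁, τ₂ > 0, k > 1/π, ω ∈ ℝ, and let (x, θ) : I → ℝ² be a differentiable solution on an interval I of the system ẋ = v_e(θ), θ̇ = ω − (K_vco/τ₁)(x + τ₂ v_e(θ)). Then for every t ∈ I, the derivative of t ↦ V(x(t), θ(t)) equals −(K_vco τ₂/τ₁) v_e(θ(t))² ≤ 0; in particular t ↦ V(x(t), θ(t)) is nonincreasing on I. -/
/-!
Both linear pieces of `v_e` equal `1` at `1/k + 2πm` and `-1` at `-1/k + 2πm`, so `v_e` is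
continuous and `d/dt ∫₀^θ v_e = v_e(θ) θ̇` by the fundamental theorem of calculus. The shift
`τ₁ω/K_vco` in `V` is what makes the cross terms `(K_vco/τ₁)(x - τ₁ω/K_vco) v_e(θ)` and
`v_e(θ)(ω - (K_vco/τ₁) x)` cancel, leaving `-(K_vco τ₂/τ₁) v_e(θ)²`; monotonicity follows from
the mean value theorem.
-/

open Real Set

theorem continuous_of_continuousOn_Icc_add_zsmul {α X : Type*} [AddCommGroup α] [LinearOrder α]
    [IsOrderedAddMonoid α] [Archimedean α] [TopologicalSpace α] [OrderTopology α]
    [TopologicalSpace X] {f : α → X} {a p : α} (hp : 0 < p)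
    (hf : ∀ m : ℤ, ContinuousOn f (Icc (a + m • p) (a + m • p + p))) : Continuous f := by
  refine continuous_iff_continuousAt.2 fun t ↦ continuousAt_iff_continuous_left_right.2 ⟨?_, ?_⟩
  · obtain ⟨hlt, hle⟩ := sub_toIocDiv_zsmul_mem_Ioc hp a t
    rw [lt_sub_iff_add_lt] at hlt
    rw [sub_le_iff_le_add, add_right_comm] at hle
    exact ((hf _).continuousWithinAt (Ioc_subset_Icc_self ⟨hlt, hle⟩)).mono_of_mem_nhdsWithin
      (Icc_mem_nhdsLE_of_mem ⟨hlt, hle⟩)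
  · obtain ⟨hle, hlt⟩ := sub_toIcoDiv_zsmul_mem_Ico hp a t
    rw [le_sub_iff_add_le] at hle
    rw [sub_lt_iff_lt_add, add_right_comm] at hlt
    exact ((hf _).continuousWithinAt (Ico_subset_Icc_self ⟨hle, hlt⟩)).mono_of_mem_nhdsWithin
      (Icc_mem_nhdsGE_of_mem ⟨hle, hlt⟩)

theorem pos_and_one_div_lt_pi {k : ℝ} (hk : 1 / π < k) : 0 < k ∧ 1 / k < π := by
  have hk0 : 0 < k := (one_div_pos.2 pi_pos).trans hk
  exact ⟨hk0, (one_div_lt pi_pos hk0).1 hk⟩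

structure IsPhaseDetectorCharacteristic (k : ℝ) (ve : ℝ → ℝ) : Prop where
  eq_of_mem_Ico_rising : ∀ (m : ℤ) (θ : ℝ),
    -(1 / k) + 2 * π * m ≤ θ → θ < 1 / k + 2 * π * m → ve θ = k * θ - 2 * π * k * m
  eq_of_mem_Ico_falling : ∀ (m : ℤ) (θ : ℝ),
    1 / k + 2 * π * m ≤ θ → θ < -(1 / k) + 2 * π * (m + 1) →
      ve θ = (-θ + π + 2 * π * m) / (π - 1 / k)

namespace IsPhaseDetectorCharacteristic

variable {k : ℝ} {ve : ℝ → ℝ}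

theorem eqOn_Icc_rising (hve : IsPhaseDetectorCharacteristic k ve) (hk : 1 / π < k) (m : ℤ) :
    EqOn ve (fun θ ↦ k * θ - 2 * π * k * m) (Icc (-(1 / k) + 2 * π * m) (1 / k + 2 * π * m)) := by
  obtain ⟨hk0, hkπ⟩ := pos_and_one_div_lt_pi hk
  rintro θ ⟨h₁, h₂⟩
  rcases h₂.lt_or_eq with h₂ | rfl
  · exact hve.eq_of_mem_Ico_rising m θ h₁ h₂
  · rw [hve.eq_of_mem_Ico_falling m _ le_rfl (by linarith), div_eq_iff (sub_ne_zero.2 hkπ.ne')]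
    field_simp
    ring

theorem eqOn_Icc_falling (hve : IsPhaseDetectorCharacteristic k ve) (hk : 1 / π < k) (m : ℤ) :
    EqOn ve (fun θ ↦ (-θ + π + 2 * π * m) / (π - 1 / k))
      (Icc (1 / k + 2 * π * m) (-(1 / k) + 2 * π * (m + 1))) := by
  obtain ⟨hk0, hkπ⟩ := pos_and_one_div_lt_pi hk
  have hk' := one_div_pos.2 hk0
  rintro θ ⟨h₁, h₂⟩
  rcases h₂.lt_or_eq with h₂ | rfl
  · exact hve.eq_of_mem_Ico_falling m θ h₁ h₂
  · rw [hve.eq_of_mem_Ico_rising (m + 1) _ (by push_cast; linarith) (by push_cast; linarith),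
      eq_div_iff (sub_ne_zero.2 hkπ.ne')]
    push_cast
    field_simp
    ring

theorem continuous (hve : IsPhaseDetectorCharacteristic k ve) (hk : 1 / π < k) :
    Continuous ve := by
  obtain ⟨hk0, hkπ⟩ := pos_and_one_div_lt_pi hk
  refine continuous_of_continuousOn_Icc_add_zsmul (a := -(1 / k)) two_pi_pos fun m ↦ ?_
  have hperiod : Icc (-(1 / k) + m • (2 * π)) (-(1 / k) + m • (2 * π) + 2 * π) =
      Icc (-(1 / k) + 2 * π * m) (1 / k + 2 * π * m) ∪
        Icc (1 / k + 2 * π * m) (-(1 / k) + 2 * π * (m + 1)) := by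
    rw [Icc_union_Icc_eq_Icc (by linarith [one_div_pos.2 hk0]) (by linarith), zsmul_eq_mul]
    ring_nf
  have hrising := (Continuous.continuousOn (by fun_prop)).congr (hve.eqOn_Icc_rising hk m)
  have hfalling := (Continuous.continuousOn (by fun_prop)).congr (hve.eqOn_Icc_falling hk m)
  rw [hperiod]
  exact hrising.union_of_isClosed hfalling isClosed_Icc isClosed_Icc

end IsPhaseDetectorCharacteristic

noncomputable def pllLyapunov (Kvco τ₁ ω : ℝ) (ve : ℝ → ℝ) (x θ : ℝ) : ℝ :=
  (Kvco / (2 * τ₁)) * (x - τ₁ * ω / Kvco) ^ 2 + ∫ σ in (0:ℝ)..θ, ve σ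

theorem hasDerivWithinAt_pllLyapunov {Kvco τ₁ τ₂ ω t : ℝ} {ve x θ : ℝ → ℝ} {s : Set ℝ}
    (hK : Kvco ≠ 0) (hτ₁ : τ₁ ≠ 0) (hve : Continuous ve)
    (hx : HasDerivWithinAt x (ve (θ t)) s t)
    (hθ : HasDerivWithinAt θ (ω - (Kvco / τ₁) * (x t + τ₂ * ve (θ t))) s t) :
    HasDerivWithinAt (fun r ↦ pllLyapunov Kvco τ₁ ω ve (x r) (θ r))
      (-(Kvco * τ₂ / τ₁) * ve (θ t) ^ 2) s t := by
  have hquad := ((hx.sub_const (τ₁ * ω / Kvco)).pow 2).const_mul (Kvco / (2 * τ₁))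
  have hint := (hve.integral_hasStrictDerivAt 0 (θ t)).hasDerivAt.comp_hasDerivWithinAt t hθ
  refine (hquad.add hint).congr_deriv ?_
  simp only [Nat.cast_ofNat, Nat.add_one_sub_one, pow_one]
  field_simp
  ring

/-- along any solution of the PLL system, the Lyapunov function
`V(x, θ) = (K_vco/(2τ₁))(x − τ₁ω/K_vco)² + ∫₀^θ v_e(σ)dσ` has derivative
`−(K_vco τ₂/τ₁) v_e(θ(t))² ≤ 0`; in particular it is nonincreasing. -/
theorem lyapunov_derivative_along_solutions
    (Kvco τ₁ τ₂ : ℝ) (hK : 0 < Kvco) (hτ₁ : 0 < τ₁) (hτ₂ : 0 < τ₂)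
    (k : ℝ) (hk : 1 / π < k) (ω : ℝ) (ve : ℝ → ℝ)
    (hve1 : ∀ (m : ℤ) (θ : ℝ),
      -(1 / k) + 2 * π * m ≤ θ → θ < 1 / k + 2 * π * m →
      ve θ = k * θ - 2 * π * k * m)
    (hve2 : ∀ (m : ℤ) (θ : ℝ),
      1 / k + 2 * π * m ≤ θ → θ < -(1 / k) + 2 * π * (m + 1) →
      ve θ = (-θ + π + 2 * π * m) / (π - 1 / k))
    (I : Set ℝ) (hI : I.OrdConnected)
    (x θ : ℝ → ℝ)
    (hx : ∀ t ∈ I, HasDerivWithinAt x (ve (θ t)) I t)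
    (hθ : ∀ t ∈ I,
      HasDerivWithinAt θ (ω - (Kvco / τ₁) * (x t + τ₂ * ve (θ t))) I t) :
    (∀ t ∈ I,
      HasDerivWithinAt
        (fun s => (Kvco / (2 * τ₁)) * (x s - τ₁ * ω / Kvco) ^ 2 +
          ∫ σ in (0:ℝ)..(θ s), ve σ)
        (-(Kvco * τ₂ / τ₁) * (ve (θ t)) ^ 2) I t ∧
      -(Kvco * τ₂ / τ₁) * (ve (θ t)) ^ 2 ≤ 0) ∧
    AntitoneOn
      (fun s => (Kvco / (2 * τ₁)) * (x s - τ₁ * ω / Kvco) ^ 2 +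
        ∫ σ in (0:ℝ)..(θ s), ve σ) I := by
  have hve : Continuous ve := IsPhaseDetectorCharacteristic.continuous ⟨hve1, hve2⟩ hk
  have hV : ∀ t ∈ I, HasDerivWithinAt (fun s ↦ pllLyapunov Kvco τ₁ ω ve (x s) (θ s))
      (-(Kvco * τ₂ / τ₁) * ve (θ t) ^ 2) I t := fun t ht ↦
    hasDerivWithinAt_pllLyapunov hK.ne' hτ₁.ne' hve (hx t ht) (hθ t ht)
  have hV_nonpos : ∀ t, -(Kvco * τ₂ / τ₁) * ve (θ t) ^ 2 ≤ 0 := fun t ↦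
    mul_nonpos_of_nonpos_of_nonneg (neg_nonpos.2 (by positivity)) (sq_nonneg _)
  refine ⟨fun t ht ↦ ⟨hV t ht, hV_nonpos t⟩, ?_⟩
  exact antitoneOn_of_hasDerivWithinAt_nonpos hI.convex (fun t ht ↦ (hV t ht).continuousWithinAt)
    (fun t ht ↦ (hV t (interior_subset ht)).mono interior_subset) fun t _ ↦ hV_nonpos t
end

section
/- Let a > 0, k > 1/π with a²k > 4 and b = √(a² − 4/k). Let (y, θ) : I → ℝ² be a differentiable solution on an interval I of the linear system θ̇ = y, ẏ = −aky − kθ, such that u(t) := y(t) + ((a−b)k/2)θ(t) > 0 and v(t) := y(t) + ((a+b)k/2)θ(t) > 0 for all t ∈ I. Then the function t ↦ u(t)^{(b−a)/b} · v(t)^{(b+a)/b} is constant on I (a first integral of the system in this region). -/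
open Real

/-!
Along the two eigendirections of the linear system the coordinates
`u = y + c₋ θ` and `v = y + c₊ θ`, with `c∓ = (a ∓ b) k / 2` the roots of `c² − a k c + k = 0`,
solve the scalar equations `u̇ = −c₊ u` and `v̇ = −c₋ v`. Hence `u ^ p * v ^ q` grows at the
exponential rate `−(p c₊ + q c₋)`, which vanishes for `p = (b − a) / b`, `q = (b + a) / b`.
-/

theorem Convex.eq_of_forall_hasDerivWithinAt_zero {E : Type*} [NormedAddCommGroup E]
    [NormedSpace ℝ E] {f : ℝ → E} {s : Set ℝ} (hs : Convex ℝ s)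
    (hf : ∀ t ∈ s, HasDerivWithinAt f 0 s t) {t₁ t₂ : ℝ} (h₁ : t₁ ∈ s) (h₂ : t₂ ∈ s) :
    f t₁ = f t₂ := by
  have h := hs.norm_image_sub_le_of_norm_hasDerivWithin_le (C := 0) hf (fun _ _ => by simp) h₁ h₂
  rw [zero_mul, norm_le_zero_iff, sub_eq_zero] at h
  exact h.symm

theorem HasDerivWithinAt.rpow_const_of_eq_mul {u : ℝ → ℝ} {s : Set ℝ} {t c : ℝ}
    (hu : HasDerivWithinAt u (c * u t) s t) (hpos : 0 < u t) (p : ℝ) :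
    HasDerivWithinAt (fun x => u x ^ p) (p * c * u t ^ p) s t := by
  refine (hu.rpow_const (Or.inl hpos.ne')).congr_deriv ?_
  rw [rpow_sub_one hpos.ne']
  field_simp

theorem rpow_mul_rpow_eq_of_hasDerivWithinAt_eq_mul {u v : ℝ → ℝ} {s : Set ℝ}
    (hs : s.OrdConnected) {c d p q : ℝ}
    (hu : ∀ t ∈ s, HasDerivWithinAt u (c * u t) s t)
    (hv : ∀ t ∈ s, HasDerivWithinAt v (d * v t) s t)
    (hu_pos : ∀ t ∈ s, 0 < u t) (hv_pos : ∀ t ∈ s, 0 < v t) (hpq : p * c + q * d = 0) :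
    ∀ t₁ ∈ s, ∀ t₂ ∈ s, u t₁ ^ p * v t₁ ^ q = u t₂ ^ p * v t₂ ^ q := by
  refine fun t₁ h₁ t₂ h₂ =>
    hs.convex.eq_of_forall_hasDerivWithinAt_zero (f := fun t => u t ^ p * v t ^ q)
      (fun t ht => ?_) h₁ h₂
  refine (((hu t ht).rpow_const_of_eq_mul (hu_pos t ht) p).mul
    ((hv t ht).rpow_const_of_eq_mul (hv_pos t ht) q)).congr_deriv ?_
  linear_combination (u t ^ p * v t ^ q) * hpq

theorem hasDerivWithinAt_add_mul_of_root {y θ : ℝ → ℝ} {s : Set ℝ} {t A B c : ℝ}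
    (hθ : HasDerivWithinAt θ (y t) s t) (hy : HasDerivWithinAt y (-A * y t - B * θ t) s t)
    (hc : c ^ 2 - A * c + B = 0) :
    HasDerivWithinAt (fun x => y x + c * θ x) ((c - A) * (y t + c * θ t)) s t :=
  (hy.add (hθ.const_mul c)).congr_deriv (by linear_combination -θ t * hc)

theorem node_first_integral_general
    (a k : ℝ) (hnode : 4 < a ^ 2 * k)
    (b : ℝ) (hb : b = Real.sqrt (a ^ 2 - 4 / k))
    (I : Set ℝ) (hI : I.OrdConnected)
    (y θ : ℝ → ℝ)
    (hθ : ∀ t ∈ I, HasDerivWithinAt θ (y t) I t)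
    (hy : ∀ t ∈ I, HasDerivWithinAt y (-(a * k) * y t - k * θ t) I t)
    (hu : ∀ t ∈ I, 0 < y t + ((a - b) * k / 2) * θ t)
    (hv : ∀ t ∈ I, 0 < y t + ((a + b) * k / 2) * θ t) :
    ∀ t₁ ∈ I, ∀ t₂ ∈ I,
      (y t₁ + ((a - b) * k / 2) * θ t₁) ^ ((b - a) / b) *
        (y t₁ + ((a + b) * k / 2) * θ t₁) ^ ((b + a) / b) =
      (y t₂ + ((a - b) * k / 2) * θ t₂) ^ ((b - a) / b) *
        (y t₂ + ((a + b) * k / 2) * θ t₂) ^ ((b + a) / b) := by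
  have hk : 0 < k := pos_of_mul_pos_right (by linarith) (sq_nonneg a)
  have hb_sq : b ^ 2 * k = a ^ 2 * k - 4 := by
    have hdisc : 0 ≤ a ^ 2 - 4 / k := by
      rw [sub_nonneg, div_le_iff₀ hk]; exact hnode.le
    rw [hb, sq_sqrt hdisc]
    field_simp
  have hroot : ∀ c, c = (a - b) * k / 2 ∨ c = (a + b) * k / 2 → c ^ 2 - a * k * c + k = 0 := by
    rintro c (rfl | rfl) <;> linear_combination (k / 4) * hb_sq
  refine rpow_mul_rpow_eq_of_hasDerivWithinAt_eq_mul hI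
    (fun t ht => hasDerivWithinAt_add_mul_of_root (hθ t ht) (hy t ht) (hroot _ (.inl rfl)))
    (fun t ht => hasDerivWithinAt_add_mul_of_root (hθ t ht) (hy t ht) (hroot _ (.inr rfl)))
    hu hv ?_
  ring

/-- in the node case `a²k > 4`, along solutions of
`θ̇ = y`, `ẏ = −aky − kθ` staying in the region where
`u = y + ((a−b)k/2)θ > 0` and `v = y + ((a+b)k/2)θ > 0`, the quantity
`u^{(b−a)/b} · v^{(b+a)/b}` is a first integral. -/
theorem node_first_integral
    (a k : ℝ) (ha : 0 < a) (hk : 1 / π < k) (hnode : 4 < a ^ 2 * k)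
    (b : ℝ) (hb : b = Real.sqrt (a ^ 2 - 4 / k))
    (I : Set ℝ) (hI : I.OrdConnected)
    (y θ : ℝ → ℝ)
    (hθ : ∀ t ∈ I, HasDerivWithinAt θ (y t) I t)
    (hy : ∀ t ∈ I, HasDerivWithinAt y (-(a * k) * y t - k * θ t) I t)
    (hu : ∀ t ∈ I, 0 < y t + ((a - b) * k / 2) * θ t)
    (hv : ∀ t ∈ I, 0 < y t + ((a + b) * k / 2) * θ t) :
    ∀ t₁ ∈ I, ∀ t₂ ∈ I,
      (y t₁ + ((a - b) * k / 2) * θ t₁) ^ ((b - a) / b) *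
        (y t₁ + ((a + b) * k / 2) * θ t₁) ^ ((b + a) / b) =
      (y t₂ + ((a - b) * k / 2) * θ t₂) ^ ((b - a) / b) *
        (y t₂ + ((a + b) * k / 2) * θ t₂) ^ ((b + a) / b) :=
  node_first_integral_general a k hnode b hb I hI y θ hθ hy hu hv
end

section
/- Let a > 0 and k = 4/a² (the case a²k = 4). Let (y, θ) : I → ℝ² be a differentiable solution on an interval I of the linear system θ̇ = y, ẏ = −(4/a)y − (4/a²)θ, such that 2θ(t) + a y(t) > 0 for all t ∈ I. Then the function t ↦ 2θ(t)/(2θ(t) + a y(t)) + ln(2θ(t) + a y(t)) is constant on I. -/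
/-! Along a solution, `u = 2θ + a y` solves `u̇ = -(2/a) u` and `v = 2θ` solves
`v̇ = (2/a)(u - v)`. Hence `(v/u)˙ = 2/a` while `(log u)˙ = -2/a`, so `v/u + log u` has zero
derivative and is constant on the interval. -/

theorem Set.OrdConnected.eq_of_hasDerivWithinAt_eq_zero {E : Type*} [NormedAddCommGroup E]
    [NormedSpace ℝ E] {f : ℝ → E} {s : Set ℝ} (hs : s.OrdConnected)
    (hf : ∀ t ∈ s, HasDerivWithinAt f 0 s t) {x y : ℝ} (hx : x ∈ s) (hy : y ∈ s) :
    f x = f y := by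
  have h := hs.convex.norm_image_sub_le_of_norm_hasDerivWithin_le hf
    (fun _ _ => norm_zero.le) hx hy
  rw [zero_mul, norm_le_zero_iff, sub_eq_zero] at h
  exact h.symm

theorem HasDerivWithinAt.div_add_log_of_linear {u v : ℝ → ℝ} {s : Set ℝ} {t c : ℝ}
    (hu : HasDerivWithinAt u (-c * u t) s t) (hv : HasDerivWithinAt v (c * (u t - v t)) s t)
    (hu₀ : u t ≠ 0) : HasDerivWithinAt (fun t => v t / u t + Real.log (u t)) 0 s t := by
  refine ((hv.div hu hu₀).add (hu.log hu₀)).congr_deriv ?_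
  field_simp
  ring

theorem degenerate_node_first_integral_general
    (a : ℝ) (ha : 0 < a)
    (I : Set ℝ) (hI : I.OrdConnected)
    (y θ : ℝ → ℝ)
    (hθ : ∀ t ∈ I, HasDerivWithinAt θ (y t) I t)
    (hy : ∀ t ∈ I, HasDerivWithinAt y (-(4 / a) * y t - (4 / a ^ 2) * θ t) I t)
    (hpos : ∀ t ∈ I, 0 < 2 * θ t + a * y t) :
    ∀ t₁ ∈ I, ∀ t₂ ∈ I,
      2 * θ t₁ / (2 * θ t₁ + a * y t₁) + Real.log (2 * θ t₁ + a * y t₁) =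
      2 * θ t₂ / (2 * θ t₂ + a * y t₂) + Real.log (2 * θ t₂ + a * y t₂) := by
  intro t₁ ht₁ t₂ ht₂
  have hv : ∀ t ∈ I, HasDerivWithinAt (fun t => 2 * θ t)
      (2 / a * ((2 * θ t + a * y t) - 2 * θ t)) I t := fun t ht => by
    refine ((hθ t ht).const_mul 2).congr_deriv ?_
    field_simp [ha.ne']
    ring
  have hu : ∀ t ∈ I, HasDerivWithinAt (fun t => 2 * θ t + a * y t)
      (-(2 / a) * (2 * θ t + a * y t)) I t := fun t ht => by
    refine (((hθ t ht).const_mul 2).add ((hy t ht).const_mul a)).congr_deriv ?_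
    field_simp [ha.ne']
    ring
  exact hI.eq_of_hasDerivWithinAt_eq_zero
    (fun t ht => (hu t ht).div_add_log_of_linear (hv t ht) (hpos t ht).ne') ht₁ ht₂

/-- in the degenerate-node case `k = 4/a²`, along solutions of
`θ̇ = y`, `ẏ = −(4/a)y − (4/a²)θ` staying in the region `2θ + ay > 0`, the quantity
`2θ/(2θ + ay) + ln(2θ + ay)` is a first integral. -/
theorem degenerate_node_first_integral
    (a : ℝ) (ha : 0 < a) (k : ℝ) (hk : k = 4 / a ^ 2)
    (I : Set ℝ) (hI : I.OrdConnected)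
    (y θ : ℝ → ℝ)
    (hθ : ∀ t ∈ I, HasDerivWithinAt θ (y t) I t)
    (hy : ∀ t ∈ I, HasDerivWithinAt y (-(4 / a) * y t - (4 / a ^ 2) * θ t) I t)
    (hpos : ∀ t ∈ I, 0 < 2 * θ t + a * y t) :
    ∀ t₁ ∈ I, ∀ t₂ ∈ I,
      2 * θ t₁ / (2 * θ t₁ + a * y t₁) + Real.log (2 * θ t₁ + a * y t₁) =
      2 * θ t₂ / (2 * θ t₂ + a * y t₂) + Real.log (2 * θ t₂ + a * y t₂) :=
  degenerate_node_first_integral_general a ha I hI y θ hθ hy hpos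
end

section
/- Let a > 0, k > 1/π with a²k < 4 and b = √(4/k − a²). Let (y, θ) : I → ℝ² be a differentiable solution on an interval I of the linear system θ̇ = y, ẏ = −aky − kθ, such that θ(t) > 0 for all t ∈ I. Then the function t ↦ (1/2)ln(y(t)² + ak y(t)θ(t) + k θ(t)²) − (a/b)·arctan((a θ(t) + (2/k) y(t))/(b θ(t))) is constant on I. -/
open Real

/-!
Along the flow `θ̇ = y`, `ẏ = −aky − kθ` the quadratic form `Q = y² + akyθ + kθ²` satisfies
`Q̇ = −ak·Q`, so `log Q` decreases at the constant rate `ak`. The slope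
`u = (aθ + (2/k)y)/(bθ)` satisfies `u̇ = −(2b/k)·Q/(bθ)²` and, because `b² = 4/k − a²`,
`1 + u² = 4Q/(kbθ)²`; hence `arctan u` decreases at the constant rate `bk/2`. The two rates
cancel in `(1/2)·log Q − (a/b)·arctan u`.
-/

theorem Convex.eq_of_hasDerivWithinAt_zero {𝕜 G : Type*} [RCLike 𝕜] [NormedAddCommGroup G]
    [NormedSpace 𝕜 G] {f : 𝕜 → G} {s : Set 𝕜} (hs : Convex ℝ s)
    (hf : ∀ x ∈ s, HasDerivWithinAt f 0 s x) {x y : 𝕜} (hx : x ∈ s) (hy : y ∈ s) :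
    f x = f y := by
  have h := norm_image_sub_le_of_norm_hasDerivWithin_le hf (fun _ _ => norm_zero.le) hs hy hx
  rwa [zero_mul, norm_le_zero_iff, sub_eq_zero] at h

namespace PLL

def quadForm (a k y θ : ℝ) : ℝ := y ^ 2 + a * k * y * θ + k * θ ^ 2

noncomputable def firstIntegral (a k b y θ : ℝ) : ℝ :=
  (1 / 2) * log (quadForm a k y θ) - (a / b) * arctan ((a * θ + (2 / k) * y) / (b * θ))

theorem quadForm_pos {a k y θ : ℝ} (hk : 0 < k) (hfocus : a ^ 2 * k < 4) (hθ : θ ≠ 0) :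
    0 < quadForm a k y θ := by
  have hθ2 : 0 < θ ^ 2 := by positivity
  have hsquares : 4 * quadForm a k y θ = (2 * y + a * k * θ) ^ 2 + k * (4 - a ^ 2 * k) * θ ^ 2 := by
    unfold quadForm; ring
  nlinarith [sq_nonneg (2 * y + a * k * θ), mul_pos (mul_pos hk (sub_pos.2 hfocus)) hθ2]

section Flow

variable {a k b : ℝ} {y θ : ℝ → ℝ} {s : Set ℝ} {t : ℝ}
  (hθ : HasDerivWithinAt θ (y t) s t)
  (hy : HasDerivWithinAt y (-(a * k) * y t - k * θ t) s t)
include hθ hy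

theorem hasDerivWithinAt_quadForm :
    HasDerivWithinAt (fun t => quadForm a k (y t) (θ t))
      (-(a * k) * quadForm a k (y t) (θ t)) s t :=
  (((hy.pow 2).add ((hy.const_mul (a * k)).mul hθ)).add ((hθ.pow 2).const_mul k)).congr_deriv
    (by unfold quadForm; ring)

theorem hasDerivWithinAt_log_quadForm (hQ : quadForm a k (y t) (θ t) ≠ 0) :
    HasDerivWithinAt (fun t => log (quadForm a k (y t) (θ t))) (-(a * k)) s t :=
  ((hasDerivWithinAt_quadForm hθ hy).log hQ).congr_deriv (by field_simp)

theorem hasDerivWithinAt_arctan_slope (hk : k ≠ 0) (hb : b ≠ 0) (hb2 : b ^ 2 = 4 / k - a ^ 2)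
    (hθt : θ t ≠ 0) (hQ : quadForm a k (y t) (θ t) ≠ 0) :
    HasDerivWithinAt (fun t => arctan ((a * θ t + (2 / k) * y t) / (b * θ t))) (-(b * k) / 2)
      s t := by
  have hslope : HasDerivWithinAt (fun t => (a * θ t + (2 / k) * y t) / (b * θ t))
      (-(2 * b / k) * quadForm a k (y t) (θ t) / (b * θ t) ^ 2) s t :=
    (((hθ.const_mul a).fun_add (hy.const_mul (2 / k))).fun_div (hθ.const_mul b)
      (mul_ne_zero hb hθt)).congr_deriv (by unfold quadForm; field_simp; ring)
  have hunit : 1 + ((a * θ t + (2 / k) * y t) / (b * θ t)) ^ 2 =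
      4 * quadForm a k (y t) (θ t) / (k * b * θ t) ^ 2 := by
    have hkb : k * b ^ 2 = 4 - a ^ 2 * k := by rw [hb2]; field_simp
    unfold quadForm
    field_simp
    linear_combination θ t ^ 2 * k * hkb
  refine hslope.arctan.congr_deriv ?_
  rw [hunit]
  field_simp
  ring

theorem hasDerivWithinAt_firstIntegral (hk : k ≠ 0) (hb : b ≠ 0) (hb2 : b ^ 2 = 4 / k - a ^ 2)
    (hθt : θ t ≠ 0) (hQ : quadForm a k (y t) (θ t) ≠ 0) :
    HasDerivWithinAt (fun t => firstIntegral a k b (y t) (θ t)) 0 s t :=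
  (((hasDerivWithinAt_log_quadForm hθ hy hQ).const_mul (1 / 2)).sub
    ((hasDerivWithinAt_arctan_slope hθ hy hk hb hb2 hθt hQ).const_mul (a / b))).congr_deriv
    (by field_simp; ring)

end Flow

end PLL

theorem focus_first_integral_general
    (a k : ℝ) (hk : 1 / π < k) (hfocus : a ^ 2 * k < 4)
    (b : ℝ) (hb : b = Real.sqrt (4 / k - a ^ 2))
    (I : Set ℝ) (hI : I.OrdConnected)
    (y θ : ℝ → ℝ)
    (hθ : ∀ t ∈ I, HasDerivWithinAt θ (y t) I t)
    (hy : ∀ t ∈ I, HasDerivWithinAt y (-(a * k) * y t - k * θ t) I t)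
    (hpos : ∀ t ∈ I, 0 < θ t) :
    ∀ t₁ ∈ I, ∀ t₂ ∈ I,
      (1 / 2) * Real.log ((y t₁) ^ 2 + a * k * y t₁ * θ t₁ + k * (θ t₁) ^ 2) -
        (a / b) * Real.arctan ((a * θ t₁ + (2 / k) * y t₁) / (b * θ t₁)) =
      (1 / 2) * Real.log ((y t₂) ^ 2 + a * k * y t₂ * θ t₂ + k * (θ t₂) ^ 2) -
        (a / b) * Real.arctan ((a * θ t₂ + (2 / k) * y t₂) / (b * θ t₂)) := by
  have hk0 : 0 < k := lt_trans (by positivity) hk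
  have hdisc : 0 < 4 / k - a ^ 2 := by
    rw [sub_pos, lt_div_iff₀ hk0]; exact hfocus
  have hb0 : b ≠ 0 := hb ▸ (Real.sqrt_pos.2 hdisc).ne'
  have hb2 : b ^ 2 = 4 / k - a ^ 2 := hb ▸ Real.sq_sqrt hdisc.le
  intro t₁ ht₁ t₂ ht₂
  refine hI.convex.eq_of_hasDerivWithinAt_zero (f := fun t => PLL.firstIntegral a k b (y t) (θ t))
    (fun t ht => ?_) ht₁ ht₂
  have hθt := (hpos t ht).ne'
  exact PLL.hasDerivWithinAt_firstIntegral (hθ t ht) (hy t ht) hk0.ne' hb0 hb2 hθt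
    (PLL.quadForm_pos hk0 hfocus hθt).ne'

/-- in the focus case `a²k < 4`, along solutions of
`θ̇ = y`, `ẏ = −aky − kθ` staying in the region `θ > 0`, the quantity
`(1/2)ln(y² + akyθ + kθ²) − (a/b)·arctan((aθ + (2/k)y)/(bθ))` is a first integral. -/
theorem focus_first_integral
    (a k : ℝ) (ha : 0 < a) (hk : 1 / π < k) (hfocus : a ^ 2 * k < 4)
    (b : ℝ) (hb : b = Real.sqrt (4 / k - a ^ 2))
    (I : Set ℝ) (hI : I.OrdConnected)
    (y θ : ℝ → ℝ)
    (hθ : ∀ t ∈ I, HasDerivWithinAt θ (y t) I t)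
    (hy : ∀ t ∈ I, HasDerivWithinAt y (-(a * k) * y t - k * θ t) I t)
    (hpos : ∀ t ∈ I, 0 < θ t) :
    ∀ t₁ ∈ I, ∀ t₂ ∈ I,
      (1 / 2) * Real.log ((y t₁) ^ 2 + a * k * y t₁ * θ t₁ + k * (θ t₁) ^ 2) -
        (a / b) * Real.arctan ((a * θ t₁ + (2 / k) * y t₁) / (b * θ t₁)) =
      (1 / 2) * Real.log ((y t₂) ^ 2 + a * k * y t₂ * θ t₂ + k * (θ t₂) ^ 2) -
        (a / b) * Real.arctan ((a * θ t₂ + (2 / k) * y t₂) / (b * θ t₂)) :=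
  focus_first_integral_general a k hk hfocus b hb I hI y θ hθ hy hpos
end

section
/- Let a > 0, k > 1/π, p = π − 1/k and c = √(a² + 4p). Let (y, θ) : I → ℝ² be a differentiable solution on an interval I of the linear system θ̇ = y, ẏ = (1/p)(a y + θ + π), such that u(t) := y(t) + ((c−a)/(2p))(π + θ(t)) > 0 and w(t) := y(t) − ((c+a)/(2p))(π + θ(t)) > 0 for all t ∈ I. Then the function t ↦ u(t)^{(c−a)/c} · w(t)^{(c+a)/c} is constant on I (a first integral of the system in this region). -/
/-!
Proof idea: the linear system `θ̇ = y`, `ẏ = (a y + θ + π)/p` has the eigenvalues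
`λ± = (a ± c)/(2p)`, and `u`, `w` are its eigen-coordinates: `u̇ = λ₊ u`, `ẇ = λ₋ w`.
(A coordinate `y + m (π + θ)` is an eigen-coordinate exactly when `p m² + a m = 1`,
with eigenvalue `a/p + m`.)
Hence `d/dt log (u^α w^β) = α λ₊ + β λ₋`, which vanishes for `α = (c - a)/c`, `β = (c + a)/c`.
-/

open Real

theorem Set.OrdConnected.eq_of_hasDerivWithinAt_eq_zero_s13 {I : Set ℝ} {f : ℝ → ℝ}
    (hI : I.OrdConnected) (hf : ∀ t ∈ I, HasDerivWithinAt f 0 I t) :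
    ∀ t₁ ∈ I, ∀ t₂ ∈ I, f t₁ = f t₂ := by
  intro t₁ ht₁ t₂ ht₂
  have h := hI.convex.norm_image_sub_le_of_norm_hasDerivWithin_le (C := 0) hf
    (fun _ _ => norm_zero.le) ht₂ ht₁
  rw [zero_mul, norm_le_zero_iff, sub_eq_zero] at h
  exact h

theorem HasDerivWithinAt.rpow_mul_rpow_of_linear {I : Set ℝ} {u w : ℝ → ℝ} {t α β ρ σ : ℝ}
    (hu : HasDerivWithinAt u (ρ * u t) I t) (hw : HasDerivWithinAt w (σ * w t) I t)
    (hu0 : 0 < u t) (hw0 : 0 < w t) :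
    HasDerivWithinAt (fun s => u s ^ α * w s ^ β)
      ((α * ρ + β * σ) * (u t ^ α * w t ^ β)) I t := by
  refine ((hu.rpow_const (Or.inl hu0.ne')).mul (hw.rpow_const (Or.inl hw0.ne'))).congr_deriv ?_
  rw [rpow_sub hu0, rpow_sub hw0, rpow_one, rpow_one]
  field_simp

theorem hasDerivWithinAt_eigencoordinate {I : Set ℝ} {y θ : ℝ → ℝ} {t a b p m : ℝ}
    (hp : p ≠ 0) (hm : p * m ^ 2 + a * m = 1)
    (hθ : HasDerivWithinAt θ (y t) I t)
    (hy : HasDerivWithinAt y ((1 / p) * (a * y t + θ t + b)) I t) :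
    HasDerivWithinAt (fun s => y s + m * (b + θ s))
      ((a / p + m) * (y t + m * (b + θ t))) I t := by
  refine (hy.add ((hθ.const_add b).const_mul m)).congr_deriv ?_
  field_simp
  linear_combination (-(b + θ t)) * hm

theorem domain_III_first_integral_general
    (a k : ℝ) (hk : 1 / π < k)
    (p : ℝ) (hp : p = π - 1 / k)
    (c : ℝ) (hc : c = Real.sqrt (a ^ 2 + 4 * p))
    (I : Set ℝ) (hI : I.OrdConnected)
    (y θ : ℝ → ℝ)
    (hθ : ∀ t ∈ I, HasDerivWithinAt θ (y t) I t)
    (hy : ∀ t ∈ I, HasDerivWithinAt y ((1 / p) * (a * y t + θ t + π)) I t)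
    (hu : ∀ t ∈ I, 0 < y t + ((c - a) / (2 * p)) * (π + θ t))
    (hw : ∀ t ∈ I, 0 < y t - ((c + a) / (2 * p)) * (π + θ t)) :
    ∀ t₁ ∈ I, ∀ t₂ ∈ I,
      (y t₁ + ((c - a) / (2 * p)) * (π + θ t₁)) ^ ((c - a) / c) *
        (y t₁ - ((c + a) / (2 * p)) * (π + θ t₁)) ^ ((c + a) / c) =
      (y t₂ + ((c - a) / (2 * p)) * (π + θ t₂)) ^ ((c - a) / c) *
        (y t₂ - ((c + a) / (2 * p)) * (π + θ t₂)) ^ ((c + a) / c) := by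
  have hk0 : 0 < k := (one_div_pos.mpr pi_pos).trans hk
  have hp0 : 0 < p := hp ▸ sub_pos.mpr ((one_div_lt pi_pos hk0).mp hk)
  have hc0 : 0 < c := hc ▸ sqrt_pos.mpr (by positivity)
  have hc2 : c ^ 2 = a ^ 2 + 4 * p := hc ▸ sq_sqrt (by positivity)
  have hu_deriv : ∀ t ∈ I, HasDerivWithinAt (fun s => y s + ((c - a) / (2 * p)) * (π + θ s))
      ((a / p + (c - a) / (2 * p)) * (y t + ((c - a) / (2 * p)) * (π + θ t))) I t :=
    fun t ht => hasDerivWithinAt_eigencoordinate hp0.ne'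
      (by field_simp; linear_combination hc2) (hθ t ht) (hy t ht)
  have hw_deriv : ∀ t ∈ I, HasDerivWithinAt (fun s => y s - ((c + a) / (2 * p)) * (π + θ s))
      ((a / p - (c + a) / (2 * p)) * (y t - ((c + a) / (2 * p)) * (π + θ t))) I t := by
    intro t ht
    have h := hasDerivWithinAt_eigencoordinate (m := -((c + a) / (2 * p))) hp0.ne'
      (by field_simp; linear_combination hc2) (hθ t ht) (hy t ht)
    simpa only [neg_mul, ← sub_eq_add_neg] using h
  refine hI.eq_of_hasDerivWithinAt_eq_zero_s13 fun t ht => ?_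
  refine ((hu_deriv t ht).rpow_mul_rpow_of_linear (hw_deriv t ht) (hu t ht) (hw t ht)).congr_deriv ?_
  field_simp
  ring

/-- on the segment `−π ≤ θ ≤ −1/k`, along solutions of
`θ̇ = y`, `ẏ = (1/p)(ay + θ + π)` staying in the region where
`u = y + ((c−a)/(2p))(π + θ) > 0` and `w = y − ((c+a)/(2p))(π + θ) > 0`, the quantity
`u^{(c−a)/c} · w^{(c+a)/c}` is a first integral. -/
theorem domain_III_first_integral
    (a k : ℝ) (ha : 0 < a) (hk : 1 / π < k)
    (p : ℝ) (hp : p = π - 1 / k)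
    (c : ℝ) (hc : c = Real.sqrt (a ^ 2 + 4 * p))
    (I : Set ℝ) (hI : I.OrdConnected)
    (y θ : ℝ → ℝ)
    (hθ : ∀ t ∈ I, HasDerivWithinAt θ (y t) I t)
    (hy : ∀ t ∈ I, HasDerivWithinAt y ((1 / p) * (a * y t + θ t + π)) I t)
    (hu : ∀ t ∈ I, 0 < y t + ((c - a) / (2 * p)) * (π + θ t))
    (hw : ∀ t ∈ I, 0 < y t - ((c + a) / (2 * p)) * (π + θ t)) :
    ∀ t₁ ∈ I, ∀ t₂ ∈ I,
      (y t₁ + ((c - a) / (2 * p)) * (π + θ t₁)) ^ ((c - a) / c) *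
        (y t₁ - ((c + a) / (2 * p)) * (π + θ t₁)) ^ ((c + a) / c) =
      (y t₂ + ((c - a) / (2 * p)) * (π + θ t₂)) ^ ((c - a) / c) *
        (y t₂ - ((c + a) / (2 * p)) * (π + θ t₂)) ^ ((c + a) / c) :=
  domain_III_first_integral_general a k hk p hp c hc I hI y θ hθ hy hu hw
end

section
/- Let a > 0, k > 1/π with a²k > 4, b = √(a² − 4/k) and c = √(a² + 4(π − 1/k)). The function f(d) = (d − (a−b)/2)^{(b−a)/b} · (d − (a+b)/2)^{(b+a)/b} is strictly increasing on ((a+b)/2, ∞), tends to 0 as d → ((a+b)/2)⁺ and to +∞ as d → +∞; consequently the equation (d − (a−b)/2)^{(b−a)/b} (d − (a+b)/2)^{(b+a)/b} = π((c+b)/(c−b))^{a/b} has a unique solution d > (a+b)/2. -/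
/-!
With `p = (a - b) / 2`, `q = (a + b) / 2`, `α = (b - a) / b`, `β = (b + a) / b` the function is
`(d - p) ^ α * (d - q) ^ β` with `p < q`, `β > 0` and `α + β = 2`. Its derivative is
`(d - p) ^ (α - 1) * (d - q) ^ (β - 1) * ((α + β) * (d - q) + β * (q - p)) > 0` on `(q, ∞)`;
it vanishes at `q⁺` because `β > 0` and grows like `(d - q) ^ (α + β)`. The intermediate value
theorem then solves `f d = R` for every `R > 0`, and the right-hand side is positive since
`c ^ 2 = b ^ 2 + 4π`, i.e. `c > b`.
-/

open Real Filter Topology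

section SubRpowMulSubRpow

variable {p q α β : ℝ}

theorem continuousOn_sub_rpow_mul_sub_rpow (hpq : p ≤ q) :
    ContinuousOn (fun d : ℝ => (d - p) ^ α * (d - q) ^ β) (Set.Ioi q) := by
  refine ContinuousOn.mul ?_ ?_ <;> refine ContinuousOn.rpow_const (by fun_prop) fun x hx => ?_ <;>
    exact Or.inl (sub_pos.2 (by linarith [Set.mem_Ioi.1 hx])).ne'

theorem hasDerivAt_sub_rpow_mul_sub_rpow {x : ℝ} (hp : p < x) (hq : q < x) :
    HasDerivAt (fun d : ℝ => (d - p) ^ α * (d - q) ^ β)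
      ((x - p) ^ (α - 1) * (x - q) ^ (β - 1) * (α * (x - q) + β * (x - p))) x := by
  have hxp : 0 < x - p := sub_pos.2 hp
  have hxq : 0 < x - q := sub_pos.2 hq
  have hderiv := (((hasDerivAt_id' x).sub_const p).rpow_const (p := α) (Or.inl hxp.ne')).fun_mul
    (((hasDerivAt_id' x).sub_const q).rpow_const (p := β) (Or.inl hxq.ne'))
  refine hderiv.congr_deriv ?_
  rw [rpow_sub_one hxp.ne', rpow_sub_one hxq.ne']
  field_simp

theorem strictMonoOn_sub_rpow_mul_sub_rpow (hpq : p < q) (hβ : 0 < β) (hαβ : 0 ≤ α + β) :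
    StrictMonoOn (fun d : ℝ => (d - p) ^ α * (d - q) ^ β) (Set.Ioi q) := by
  refine strictMonoOn_of_deriv_pos (convex_Ioi q) (continuousOn_sub_rpow_mul_sub_rpow hpq.le)
    fun x hx => ?_
  rw [interior_Ioi, Set.mem_Ioi] at hx
  rw [(hasDerivAt_sub_rpow_mul_sub_rpow (hpq.trans hx) hx).deriv]
  have hxp : 0 < x - p := by linarith
  have hxq : 0 < x - q := by linarith
  have hlin : 0 < α * (x - q) + β * (x - p) := by nlinarith
  positivity

theorem tendsto_sub_rpow_mul_sub_rpow_nhdsGT (hpq : p < q) (hβ : 0 < β) :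
    Tendsto (fun d : ℝ => (d - p) ^ α * (d - q) ^ β) (𝓝[>] q) (𝓝 0) := by
  have hcont : ContinuousAt (fun d : ℝ => (d - p) ^ α * (d - q) ^ β) q :=
    (continuousAt_id.sub_const p).rpow_const (Or.inl (sub_ne_zero.2 hpq.ne')) |>.mul
      ((continuousAt_id.sub_const q).rpow_const (Or.inr hβ.le))
  simpa [zero_rpow hβ.ne'] using hcont.tendsto.mono_left nhdsWithin_le_nhds

-- Near infinity `(d - p) ^ α * (d - q) ^ β = (d - q) ^ (α + β) * ((d - p) / (d - q)) ^ α`,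
-- and the second factor tends to `1`.
theorem tendsto_sub_rpow_mul_sub_rpow_atTop (hαβ : 0 < α + β) :
    Tendsto (fun d : ℝ => (d - p) ^ α * (d - q) ^ β) atTop atTop := by
  have hshift : Tendsto (fun d : ℝ => d - q) atTop atTop :=
    tendsto_atTop_add_const_right _ _ tendsto_id
  have hratio : Tendsto (fun d : ℝ => ((d - p) / (d - q)) ^ α) atTop (𝓝 1) := by
    have : Tendsto (fun d : ℝ => (d - p) / (d - q)) atTop (𝓝 1) := by
      have hsmall : Tendsto (fun d : ℝ => (q - p) / (d - q)) atTop (𝓝 0) :=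
        tendsto_const_nhds.div_atTop hshift
      have hone : Tendsto (fun d : ℝ => 1 + (q - p) / (d - q)) atTop (𝓝 1) := by
        simpa using hsmall.const_add 1
      refine hone.congr' ?_
      filter_upwards [eventually_gt_atTop q] with d hd
      field_simp [(sub_pos.2 hd).ne']
      ring
    simpa using this.rpow_const (Or.inl one_ne_zero)
  refine ((tendsto_rpow_atTop hαβ).comp hshift |>.atTop_mul_pos one_pos hratio).congr' ?_
  filter_upwards [eventually_gt_atTop (max p q)] with d hd
  have hdp : 0 < d - p := by linarith [le_max_left p q]
  have hdq : 0 < d - q := by linarith [le_max_right p q]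
  simp only [Function.comp_apply]
  rw [div_rpow hdp.le hdq.le, rpow_add hdq]
  field_simp

end SubRpowMulSubRpow

theorem StrictMonoOn.existsUnique_eq_of_tendsto
    {X Y : Type*} [ConditionallyCompleteLinearOrder X] [DenselyOrdered X] [TopologicalSpace X]
    [OrderTopology X] [NoMaxOrder X] [LinearOrder Y] [TopologicalSpace Y] [OrderTopology Y]
    {f : X → Y} {q : X} {L y : Y} (hmono : StrictMonoOn f (Set.Ioi q))
    (hcont : ContinuousOn f (Set.Ioi q)) (hbot : Tendsto f (𝓝[>] q) (𝓝 L))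
    (htop : Tendsto f atTop atTop) (hLy : L < y) :
    ∃! d, q < d ∧ f d = y := by
  obtain ⟨d₁, hd₁q, hd₁y⟩ :=
    (eventually_mem_nhdsWithin.and (hbot.eventually (gt_mem_nhds hLy))).exists
  obtain ⟨d₂, hd₁₂, hd₂y⟩ := ((eventually_ge_atTop d₁).and (htop.eventually_ge_atTop y)).exists
  have hsub : Set.Icc d₁ d₂ ⊆ Set.Ioi q := fun x hx => lt_of_lt_of_le hd₁q hx.1
  obtain ⟨d, hd, hfd⟩ :=
    intermediate_value_Icc hd₁₂ (hcont.mono hsub) ⟨hd₁y.le, hd₂y⟩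
  exact ⟨d, ⟨hsub hd, hfd⟩, fun x ⟨hxq, hfx⟩ => hmono.injOn hxq (hsub hd) (hfx.trans hfd.symm)⟩

theorem separatrix_equation_node_case_general
    (a k : ℝ) (ha : 0 < a) (hnode : 4 < a ^ 2 * k)
    (b : ℝ) (hb : b = Real.sqrt (a ^ 2 - 4 / k))
    (c : ℝ) (hc : c = Real.sqrt (a ^ 2 + 4 * (π - 1 / k))) :
    StrictMonoOn
      (fun d : ℝ => (d - (a - b) / 2) ^ ((b - a) / b) * (d - (a + b) / 2) ^ ((b + a) / b))
      (Set.Ioi ((a + b) / 2)) ∧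
    Tendsto
      (fun d : ℝ => (d - (a - b) / 2) ^ ((b - a) / b) * (d - (a + b) / 2) ^ ((b + a) / b))
      (𝓝[>] ((a + b) / 2)) (𝓝 0) ∧
    Tendsto
      (fun d : ℝ => (d - (a - b) / 2) ^ ((b - a) / b) * (d - (a + b) / 2) ^ ((b + a) / b))
      atTop atTop ∧
    ∃! d : ℝ, (a + b) / 2 < d ∧
      (d - (a - b) / 2) ^ ((b - a) / b) * (d - (a + b) / 2) ^ ((b + a) / b) =
        π * ((c + b) / (c - b)) ^ (a / b) := by
  have hdisc : 0 < a ^ 2 - 4 / k := by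
    rcases lt_or_gt_of_ne (show k ≠ 0 by rintro rfl; norm_num at hnode) with hk | hk
    · nlinarith [div_neg_of_pos_of_neg four_pos hk]
    · rwa [sub_pos, div_lt_iff₀ hk]
  have hb0 : 0 < b := hb ▸ sqrt_pos.2 hdisc
  have hbc : b < c := by
    rw [hb, hc]
    exact sqrt_lt_sqrt hdisc.le (by linarith [pi_pos, mul_one_div 4 k])
  have hpq : (a - b) / 2 < (a + b) / 2 := by linarith
  have hβ : 0 < (b + a) / b := by positivity
  have hαβ : 0 < (b - a) / b + (b + a) / b := by field_simp; linarith
  have hmono := strictMonoOn_sub_rpow_mul_sub_rpow hpq hβ hαβ.le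
  have hbot := tendsto_sub_rpow_mul_sub_rpow_nhdsGT (α := (b - a) / b) hpq hβ
  have hrhs : 0 < π * ((c + b) / (c - b)) ^ (a / b) :=
    mul_pos pi_pos (rpow_pos_of_pos (div_pos (by linarith) (by linarith)) _)
  exact ⟨hmono, hbot, tendsto_sub_rpow_mul_sub_rpow_atTop hαβ,
    hmono.existsUnique_eq_of_tendsto (continuousOn_sub_rpow_mul_sub_rpow hpq.le) hbot
      (tendsto_sub_rpow_mul_sub_rpow_atTop hαβ) hrhs⟩

/-- in the node case `a²k > 4`, the function
`f(d) = (d − (a−b)/2)^{(b−a)/b} (d − (a+b)/2)^{(b+a)/b}` is strictly increasing on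
`((a+b)/2, ∞)`, tends to `0` as `d → ((a+b)/2)⁺`, tends to `+∞` as `d → +∞`, and the
equation `f(d) = π((c+b)/(c−b))^{a/b}` has a unique solution `d > (a+b)/2`. -/
theorem separatrix_equation_node_case
    (a k : ℝ) (ha : 0 < a) (hk : 1 / π < k) (hnode : 4 < a ^ 2 * k)
    (b : ℝ) (hb : b = Real.sqrt (a ^ 2 - 4 / k))
    (c : ℝ) (hc : c = Real.sqrt (a ^ 2 + 4 * (π - 1 / k))) :
    StrictMonoOn
      (fun d : ℝ => (d - (a - b) / 2) ^ ((b - a) / b) * (d - (a + b) / 2) ^ ((b + a) / b))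
      (Set.Ioi ((a + b) / 2)) ∧
    Tendsto
      (fun d : ℝ => (d - (a - b) / 2) ^ ((b - a) / b) * (d - (a + b) / 2) ^ ((b + a) / b))
      (𝓝[>] ((a + b) / 2)) (𝓝 0) ∧
    Tendsto
      (fun d : ℝ => (d - (a - b) / 2) ^ ((b - a) / b) * (d - (a + b) / 2) ^ ((b + a) / b))
      atTop atTop ∧
    ∃! d : ℝ, (a + b) / 2 < d ∧
      (d - (a - b) / 2) ^ ((b - a) / b) * (d - (a + b) / 2) ^ ((b + a) / b) =
        π * ((c + b) / (c - b)) ^ (a / b) :=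
  separatrix_equation_node_case_general a k ha hnode b hb c hc
end

section
/- For every a > 0 there exists a unique d > a/2 satisfying (d − a/2)·exp(a/(a − 2d)) = √π · exp(a/(2√π)); moreover, a number d > a/2 satisfies this equation if and only if w := a/(2d − a) > 0 satisfies w·e^{w} = (a/(2√π))·exp(−a/(2√π)) (so that d = (a/2)(1 + 1/W(a/(2√π)·e^{−a/(2√π)})) in terms of the Lambert W function). -/
open Real Set

/-! The substitution `w = a / (2d - a)`, a bijection of `(a/2, ∞)` onto `(0, ∞)`, turns the
equation into `w e^w = c e^{-c}` with `c = a / (2√π)`, and `w ↦ w e^w` is strictly increasing on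
`[0, ∞)`, so this has exactly one positive solution (namely `w = W(c e^{-c})`). -/

theorem strictMonoOn_mul_exp : StrictMonoOn (fun x : ℝ => x * exp x) (Ici 0) :=
  fun x hx _ _ hxy => mul_lt_mul' hxy.le (exp_lt_exp.2 hxy) (exp_pos x).le
    ((mem_Ici.1 hx).trans_lt hxy)

theorem existsUnique_pos_mul_exp_eq {t : ℝ} (ht : 0 < t) :
    ∃! w : ℝ, 0 < w ∧ w * exp w = t := by
  obtain ⟨w, hw, hwt⟩ : ∃ w ∈ Icc 0 t, w * exp w = t := by
    refine intermediate_value_Icc ht.le (by fun_prop) ⟨by simpa using ht.le, ?_⟩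
    simpa using mul_le_mul_of_nonneg_left (one_le_exp ht.le) ht.le
  have hw_pos : 0 < w := hw.1.lt_of_ne (by rintro rfl; simp [ht.ne] at hwt)
  refine ⟨w, ⟨hw_pos, hwt⟩, fun v ⟨hv, hvt⟩ => ?_⟩
  exact strictMonoOn_mul_exp.injOn (mem_Ici.2 hv.le) (mem_Ici.2 hw_pos.le) (hvt.trans hwt.symm)

theorem div_mul_exp_neg_eq_mul_exp_div_iff {k x y : ℝ} (hx : x ≠ 0) (hy : y ≠ 0) :
    k / x * exp (-x) = y * exp (k / y) ↔ x * exp x = k / y * exp (-(k / y)) := by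
  rw [exp_neg, exp_neg]
  constructor <;> intro h <;> field_simp at h ⊢ <;> linarith

theorem div_two_mul_sub_eq_iff {a d w : ℝ} (ha : a ≠ 0) (hw : w ≠ 0) :
    a / (2 * d - a) = w ↔ d = a / 2 + a / (2 * w) := by
  constructor
  · intro h
    have hd : 2 * d - a ≠ 0 := by rintro hd; simp [hd, hw.symm] at h
    field_simp at h ⊢
    linarith
  · rintro rfl
    field_simp
    ring

theorem separatrix_eq_iff {a d s : ℝ} (ha : a ≠ 0) (hd : a / 2 < d) (hs : s ≠ 0) :
    (d - a / 2) * exp (a / (a - 2 * d)) = s * exp (a / (2 * s)) ↔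
      a / (2 * d - a) * exp (a / (2 * d - a)) = a / (2 * s) * exp (-(a / (2 * s))) := by
  have hd' : 2 * d - a ≠ 0 := by linarith
  have hw : a / (2 * d - a) ≠ 0 := div_ne_zero ha hd'
  have h_sub : d - a / 2 = a / 2 / (a / (2 * d - a)) := by field_simp
  have h_exp : a / (a - 2 * d) = -(a / (2 * d - a)) := by rw [← div_neg, neg_sub]
  have h_half : a / (2 * s) = a / 2 / s := by rw [div_div]
  rw [h_sub, h_exp, h_half]
  exact div_mul_exp_neg_eq_mul_exp_div_iff hw hs

/-- in the degenerate-node case, for every `a > 0` there is a unique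
`d > a/2` with `(d − a/2)·exp(a/(a − 2d)) = √π·exp(a/(2√π))`; moreover `d > a/2`
satisfies the equation iff `w = a/(2d − a) > 0` satisfies
`w·e^w = (a/(2√π))·exp(−a/(2√π))` (giving `d` via the Lambert W function). -/
theorem separatrix_equation_degenerate_case (a : ℝ) (ha : 0 < a) :
    (∃! d : ℝ, a / 2 < d ∧
      (d - a / 2) * Real.exp (a / (a - 2 * d)) =
        Real.sqrt π * Real.exp (a / (2 * Real.sqrt π))) ∧
    ∀ d : ℝ, a / 2 < d →
      (0 < a / (2 * d - a) ∧
        ((d - a / 2) * Real.exp (a / (a - 2 * d)) =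
            Real.sqrt π * Real.exp (a / (2 * Real.sqrt π)) ↔
          (a / (2 * d - a)) * Real.exp (a / (2 * d - a)) =
            (a / (2 * Real.sqrt π)) * Real.exp (-(a / (2 * Real.sqrt π))))) := by
  have hs : Real.sqrt π ≠ 0 := (Real.sqrt_pos.2 pi_pos).ne'
  have hw_pos : ∀ d, a / 2 < d → 0 < a / (2 * d - a) := fun d hd => div_pos ha (by linarith)
  refine ⟨?_, fun d hd => ⟨hw_pos d hd, separatrix_eq_iff ha.ne' hd hs⟩⟩
  obtain ⟨w, ⟨hw, hw_eq⟩, hw_unique⟩ :=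
    existsUnique_pos_mul_exp_eq (t := a / (2 * Real.sqrt π) * exp (-(a / (2 * Real.sqrt π))))
      (by positivity)
  have hd₀ : a / 2 < a / 2 + a / (2 * w) := by simp only [lt_add_iff_pos_right]; positivity
  have hw₀ : a / (2 * (a / 2 + a / (2 * w)) - a) = w :=
    (div_two_mul_sub_eq_iff ha.ne' hw.ne').2 rfl
  refine ⟨a / 2 + a / (2 * w), ⟨hd₀, (separatrix_eq_iff ha.ne' hd₀ hs).2 (by rwa [hw₀])⟩, ?_⟩
  rintro d ⟨hd, h_eq⟩
  refine (div_two_mul_sub_eq_iff ha.ne' hw.ne').1 (hw_unique _ ⟨hw_pos d hd, ?_⟩)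
  exact (separatrix_eq_iff ha.ne' hd hs).1 h_eq
end

section
/- Let a > 0, k > 1/π with a²k < 4, b = √(4/k − a²) and c = √(a² + 4(π − 1/k)). The function g(d) = (d² − ad + 1/k)·exp((2a/b)·arctan(b/(a − 2d))) is strictly increasing on (a/2, ∞) and tends to +∞ as d → +∞, and its limit as d → (a/2)⁺ equals (b²/4)·exp(−πa/b) < π·exp((2a/b)·arctan(b/c)); consequently the equation (d² − ad + 1/k)·exp((2a/b)·arctan(b/(a − 2d))) = π·exp((2a/b)·arctan(b/c)) has a unique solution d > a/2. -/
/-!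
With `e = 1/k` and `4e = a² + b²`, the quadratic factor is `((2d − a)² + b²)/4`, so the exponent
`(2a/b)·arctan(b/(a − 2d))` has derivative `a/(d² − ad + e)` and the derivative of the whole
function collapses to `2d·exp(…)`, positive for `d > a/2`. As `d → (a/2)⁺` the arctangent tends
to `−π/2`, and as `d → ∞` it tends to `0`. The limit at `a/2` is below `b²/4 = e − a²/4 < π`,
while the right-hand side is at least `π` because `c ≥ 0`; the intermediate value theorem and
strict monotonicity then give exactly one solution.
-/

open Real Filter Topology Set

theorem existsUnique_eq_of_strictMonoOn_Ioi {f : ℝ → ℝ} {x L y : ℝ}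
    (hmono : StrictMonoOn f (Ioi x)) (hcont : ContinuousOn f (Ioi x))
    (hlim : Tendsto f (𝓝[>] x) (𝓝 L)) (htop : Tendsto f atTop atTop) (hLy : L < y) :
    ∃! d, x < d ∧ f d = y := by
  obtain ⟨d₁, hfd₁, hd₁⟩ := ((hlim.eventually_lt_const hLy).and self_mem_nhdsWithin).exists
  obtain ⟨d₂, hfd₂, hd₁₂⟩ := ((htop.eventually_gt_atTop y).and (eventually_gt_atTop d₁)).exists
  obtain ⟨d, hd, hfd⟩ := intermediate_value_Icc hd₁₂.le
    (hcont.mono fun z hz => lt_of_lt_of_le hd₁ hz.1) ⟨hfd₁.le, hfd₂.le⟩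
  have hxd : x < d := lt_of_lt_of_le hd₁ hd.1
  exact ⟨d, ⟨hxd, hfd⟩, fun z ⟨hxz, hfz⟩ => hmono.injOn hxz hxd (hfz.trans hfd.symm)⟩

/-- The left-hand side of the separatrix equation, with `1/k` abstracted to `e`. -/
noncomputable def separatrixFun (a b e d : ℝ) : ℝ :=
  (d ^ 2 - a * d + e) * exp ((2 * a / b) * arctan (b / (a - 2 * d)))

section

variable {a b e : ℝ}

theorem separatrix_quadratic_eq (he : a ^ 2 + b ^ 2 = 4 * e) (d : ℝ) :
    d ^ 2 - a * d + e = ((2 * d - a) ^ 2 + b ^ 2) / 4 := by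
  linear_combination (-1 / 4 : ℝ) * he

theorem hasDerivAt_separatrix_exponent (he : a ^ 2 + b ^ 2 = 4 * e) (hb : b ≠ 0) {d : ℝ}
    (hd : a - 2 * d ≠ 0) :
    HasDerivAt (fun d => (2 * a / b) * arctan (b / (a - 2 * d))) (a / (d ^ 2 - a * d + e)) d := by
  have hq : (2 * d - a) ^ 2 + b ^ 2 ≠ 0 := by positivity
  have hquot : HasDerivAt (fun d => b / (a - 2 * d)) (2 * b / (a - 2 * d) ^ 2) d := by
    refine ((hasDerivAt_const d b).div
      (((hasDerivAt_id d).const_mul 2).const_sub a) hd).congr_deriv ?_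
    simp only [id_eq]
    ring
  refine (((hasDerivAt_arctan _).comp d hquot).const_mul (2 * a / b)).congr_deriv ?_
  rw [separatrix_quadratic_eq he]
  field_simp
  ring

theorem hasDerivAt_separatrixFun (he : a ^ 2 + b ^ 2 = 4 * e) (hb : b ≠ 0) {d : ℝ}
    (hd : a - 2 * d ≠ 0) :
    HasDerivAt (separatrixFun a b e)
      (2 * d * exp ((2 * a / b) * arctan (b / (a - 2 * d)))) d := by
  have hq : d ^ 2 - a * d + e ≠ 0 := by
    rw [separatrix_quadratic_eq he]
    positivity
  have hpoly : HasDerivAt (fun d => d ^ 2 - a * d + e) (2 * d - a) d := by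
    refine (((hasDerivAt_pow 2 d).sub
      ((hasDerivAt_id d).const_mul a)).add_const e).congr_deriv ?_
    simp
  refine (hpoly.mul (hasDerivAt_separatrix_exponent he hb hd).exp).congr_deriv ?_
  rw [mul_left_comm, mul_div_cancel₀ a hq]
  ring

theorem strictMonoOn_separatrixFun (he : a ^ 2 + b ^ 2 = 4 * e) (ha : 0 ≤ a) (hb : b ≠ 0) :
    StrictMonoOn (separatrixFun a b e) (Ioi (a / 2)) := by
  have hderiv : ∀ d ∈ Ioi (a / 2), HasDerivAt (separatrixFun a b e) _ d := fun d hd =>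
    hasDerivAt_separatrixFun he hb (by linarith [mem_Ioi.1 hd])
  refine strictMonoOn_of_deriv_pos (convex_Ioi _)
    (fun d hd => (hderiv d hd).continuousAt.continuousWithinAt) fun d hd => ?_
  rw [interior_Ioi] at hd
  rw [(hderiv d hd).deriv]
  have : 0 < d := by linarith [mem_Ioi.1 hd]
  positivity

theorem continuousOn_separatrixFun (he : a ^ 2 + b ^ 2 = 4 * e) (hb : b ≠ 0) :
    ContinuousOn (separatrixFun a b e) (Ioi (a / 2)) := fun d hd =>
  (hasDerivAt_separatrixFun he hb (by linarith [mem_Ioi.1 hd])).continuousAt.continuousWithinAt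

theorem tendsto_separatrixFun_atTop : Tendsto (separatrixFun a b e) atTop atTop := by
  have hpoly : Tendsto (fun d : ℝ => d ^ 2 - a * d + e) atTop atTop := by
    have h := tendsto_id.atTop_mul_atTop₀ (tendsto_atTop_add_const_right atTop (-a) tendsto_id)
    exact (tendsto_atTop_add_const_right atTop e h).congr fun d => by simp only [id_eq]; ring
  have hden : Tendsto (fun d : ℝ => a - 2 * d) atTop atBot :=
    tendsto_atBot_add_const_left atTop a (tendsto_id.const_mul_atTop_of_neg
      (by norm_num : (-2 : ℝ) < 0)) |>.congr fun d => by simp only [id_eq]; ring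
  have hquot : Tendsto (fun d : ℝ => b / (a - 2 * d)) atTop (𝓝 0) :=
    tendsto_const_nhds.div_atBot hden
  have hexp : Tendsto (fun d => exp ((2 * a / b) * arctan (b / (a - 2 * d)))) atTop (𝓝 1) := by
    simpa using ((continuous_arctan.tendsto 0).comp hquot).const_mul (2 * a / b) |>.rexp
  exact hpoly.atTop_mul_pos one_pos hexp

theorem tendsto_separatrixFun_nhdsGT (he : a ^ 2 + b ^ 2 = 4 * e) (hb : 0 < b) :
    Tendsto (separatrixFun a b e) (𝓝[>] (a / 2)) (𝓝 (b ^ 2 / 4 * exp (-(π * a) / b))) := by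
  have hpoly : Tendsto (fun d : ℝ => d ^ 2 - a * d + e) (𝓝[>] (a / 2)) (𝓝 (b ^ 2 / 4)) :=
    ((by fun_prop : Continuous fun d : ℝ => d ^ 2 - a * d + e).tendsto' (a / 2) _
      (by rw [separatrix_quadratic_eq he]; ring)).mono_left nhdsWithin_le_nhds
  have hden : Tendsto (fun d => a - 2 * d) (𝓝[>] (a / 2)) (𝓝[<] 0) := by
    refine tendsto_nhdsWithin_of_tendsto_nhds_of_eventually_within _ ?_ ?_
    · exact ((by fun_prop : Continuous fun d : ℝ => a - 2 * d).tendsto' (a / 2) 0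
        (by ring)).mono_left nhdsWithin_le_nhds
    · filter_upwards [self_mem_nhdsWithin] with d hd
      exact mem_Iio.2 (by linarith [mem_Ioi.1 hd])
  have hquot : Tendsto (fun d => b / (a - 2 * d)) (𝓝[>] (a / 2)) atBot :=
    ((tendsto_inv_nhdsLT_zero.comp hden).const_mul_atBot hb).congr fun d =>
      (div_eq_mul_inv _ _).symm
  have hexp := (((tendsto_arctan_atBot.mono_right nhdsWithin_le_nhds).comp hquot).const_mul
    (2 * a / b)).rexp
  rw [show 2 * a / b * -(π / 2) = -(π * a) / b by ring] at hexp
  exact hpoly.mul hexp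

end

theorem separatrix_limit_lt_rhs {a b c : ℝ} (ha : 0 < a) (hb : 0 < b) (hc : 0 ≤ c)
    (hbπ : b ^ 2 ≤ 4 * π) :
    b ^ 2 / 4 * exp (-(π * a) / b) < π * exp ((2 * a / b) * arctan (b / c)) :=
  calc b ^ 2 / 4 * exp (-(π * a) / b)
      < b ^ 2 / 4 := mul_lt_of_lt_one_right (by positivity) (exp_lt_one_iff.2 <|
        div_neg_of_neg_of_pos (neg_neg_of_pos (mul_pos pi_pos ha)) hb)
    _ ≤ π := by linarith
    _ ≤ π * exp ((2 * a / b) * arctan (b / c)) :=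
      le_mul_of_one_le_right pi_pos.le <| one_le_exp <|
        mul_nonneg (by positivity) (arctan_nonneg.2 (div_nonneg hb.le hc))

/-- in the focus case `a²k < 4`, the function
`g(d) = (d² − ad + 1/k)·exp((2a/b)·arctan(b/(a − 2d)))` is strictly increasing on
`(a/2, ∞)`, tends to `+∞` at `+∞`, tends to `(b²/4)·exp(−πa/b)` as `d → (a/2)⁺`, this
limit is `< π·exp((2a/b)·arctan(b/c))`, and the equation
`g(d) = π·exp((2a/b)·arctan(b/c))` has a unique solution `d > a/2`. -/
theorem separatrix_equation_focus_case
    (a k : ℝ) (ha : 0 < a) (hk : 1 / π < k) (hfocus : a ^ 2 * k < 4)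
    (b : ℝ) (hb : b = Real.sqrt (4 / k - a ^ 2))
    (c : ℝ) (hc : c = Real.sqrt (a ^ 2 + 4 * (π - 1 / k))) :
    StrictMonoOn
      (fun d : ℝ => (d ^ 2 - a * d + 1 / k) *
        Real.exp ((2 * a / b) * Real.arctan (b / (a - 2 * d))))
      (Set.Ioi (a / 2)) ∧
    Tendsto
      (fun d : ℝ => (d ^ 2 - a * d + 1 / k) *
        Real.exp ((2 * a / b) * Real.arctan (b / (a - 2 * d))))
      atTop atTop ∧
    Tendsto
      (fun d : ℝ => (d ^ 2 - a * d + 1 / k) *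
        Real.exp ((2 * a / b) * Real.arctan (b / (a - 2 * d))))
      (𝓝[>] (a / 2)) (𝓝 ((b ^ 2 / 4) * Real.exp (-(π * a) / b))) ∧
    (b ^ 2 / 4) * Real.exp (-(π * a) / b) <
      π * Real.exp ((2 * a / b) * Real.arctan (b / c)) ∧
    ∃! d : ℝ, a / 2 < d ∧
      (d ^ 2 - a * d + 1 / k) * Real.exp ((2 * a / b) * Real.arctan (b / (a - 2 * d))) =
        π * Real.exp ((2 * a / b) * Real.arctan (b / c)) := by
  have hk0 : 0 < k := (one_div_pos.2 pi_pos).trans hk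
  have hkπ : 1 / k < π := (one_div_lt hk0 pi_pos).2 hk
  have hdisc : 0 < 4 / k - a ^ 2 := by rw [sub_pos, lt_div_iff₀ hk0]; exact hfocus
  have hb0 : 0 < b := hb ▸ sqrt_pos.2 hdisc
  have he : a ^ 2 + b ^ 2 = 4 * (1 / k) := by rw [hb, sq_sqrt hdisc.le]; ring
  have hbπ : b ^ 2 ≤ 4 * π := by linarith [sq_nonneg a]
  have hmono := strictMonoOn_separatrixFun he ha.le hb0.ne'
  have hlim := tendsto_separatrixFun_nhdsGT he hb0
  have hlt := separatrix_limit_lt_rhs ha hb0 (hc ▸ sqrt_nonneg _) hbπ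
  exact ⟨hmono, tendsto_separatrixFun_atTop, hlim, hlt, existsUnique_eq_of_strictMonoOn_Ioi hmono
    (continuousOn_separatrixFun he hb0.ne') hlim tendsto_separatrixFun_atTop hlt⟩
end

section
/- Let a > 0 with a² < 2π, and set b = √(2π − a²), c = √(2π + a²), a′ = π/(2a²), m₋ = (1 − √(4a′ + 1))/2. Then a·exp((1/2)·ln(m₋² − m₋ + a′) − (1/√(4a′ − 1))·arctan((1 − 2m₋)/√(4a′ − 1)) + π/(2√(4a′ − 1))) = √π · exp((a/b)·arctan(b/c)); i.e., for a² < 2π the Huque–Stensby pull-out frequency formula ω_po = (a²/τ₂)·exp(...) coincides with twice the lock-in frequency ω_l = (a√π/(2τ₂))·exp((a/b)·arctan(b/c)) of Theorem 1 in the case a²k < 4 with the triangular characteristic k = 2/π. -/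
/-!
With `a' = π / (2a²)` one has `√(4a' - 1) = b / a`, `√(4a' + 1) = c / a` and, since `m₋` is a root
of `m² - m - a' = 0`, `m₋² - m₋ + a' = 2a' = π / a²`. The `arctan` term of the pull-out formula is
`arctan (c / b) = π / 2 - arctan (b / c)`, whose `π / 2` cancels the last summand of the exponent.
-/

open Real

theorem Real.exp_one_half_mul_log {x : ℝ} (hx : 0 < x) : exp (1 / 2 * log x) = √x := by
  rw [one_div_mul_eq_div, ← log_sqrt hx.le, exp_log (sqrt_pos.mpr hx)]

theorem Real.arctan_div_add_arctan_div {x y : ℝ} (hx : 0 < x) (hy : 0 < y) :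
    arctan (x / y) + arctan (y / x) = π / 2 := by
  rw [← inv_div y x, arctan_inv_of_pos (div_pos hy hx), sub_add_cancel]

theorem Real.sqrt_div_sq (x : ℝ) {a : ℝ} (ha : 0 ≤ a) : √(x / a ^ 2) = √x / a := by
  rw [sqrt_div' x (sq_nonneg a), sqrt_sq ha]

section HuqueStensby

variable {a' : ℝ}

theorem sq_sub_self_add_of_eq_root {m : ℝ} (ha' : 0 ≤ 4 * a' + 1)
    (hm : m = (1 - √(4 * a' + 1)) / 2) : m ^ 2 - m + a' = 2 * a' := by
  have hsq := sq_sqrt ha'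
  rw [hm]
  linear_combination hsq / 4

theorem huqueStensby_exponent_eq {m : ℝ} (ha' : 1 / 4 < a')
    (hm : m = (1 - √(4 * a' + 1)) / 2) :
    1 / 2 * log (m ^ 2 - m + a') -
        1 / √(4 * a' - 1) * arctan ((1 - 2 * m) / √(4 * a' - 1)) +
        π / (2 * √(4 * a' - 1)) =
      1 / 2 * log (2 * a') + arctan (√(4 * a' - 1) / √(4 * a' + 1)) / √(4 * a' - 1) := by
  have hs : 0 < √(4 * a' - 1) := sqrt_pos.mpr (by linarith)
  have ht : 0 < √(4 * a' + 1) := sqrt_pos.mpr (by linarith)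
  have hcompl : arctan (√(4 * a' + 1) / √(4 * a' - 1)) =
      π / 2 - arctan (√(4 * a' - 1) / √(4 * a' + 1)) :=
    eq_sub_of_add_eq (arctan_div_add_arctan_div ht hs)
  rw [sq_sub_self_add_of_eq_root (by linarith) hm,
    show 1 - 2 * m = √(4 * a' + 1) by rw [hm]; ring, hcompl]
  field_simp
  ring

end HuqueStensby

/-- for `a > 0` with `a² < 2π`, with `b = √(2π − a²)`, `c = √(2π + a²)`,
`a′ = π/(2a²)` and `m₋ = (1 − √(4a′ + 1))/2`, the Huque–Stensby pull-out frequency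
formula coincides with twice the lock-in frequency of Theorem 1 (triangular
characteristic `k = 2/π`, focus case):
`a·exp((1/2)ln(m₋² − m₋ + a′) − (1/√(4a′−1))·arctan((1 − 2m₋)/√(4a′−1)) + π/(2√(4a′−1)))
  = √π·exp((a/b)·arctan(b/c))`. -/
theorem huque_stensby_coincides_with_lockin
    (a : ℝ) (ha : 0 < a) (ha2 : a ^ 2 < 2 * π)
    (b c a' m : ℝ)
    (hb : b = Real.sqrt (2 * π - a ^ 2))
    (hc : c = Real.sqrt (2 * π + a ^ 2))
    (ha' : a' = π / (2 * a ^ 2))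
    (hm : m = (1 - Real.sqrt (4 * a' + 1)) / 2) :
    a * Real.exp ((1 / 2) * Real.log (m ^ 2 - m + a') -
        (1 / Real.sqrt (4 * a' - 1)) *
          Real.arctan ((1 - 2 * m) / Real.sqrt (4 * a' - 1)) +
        π / (2 * Real.sqrt (4 * a' - 1))) =
      Real.sqrt π * Real.exp ((a / b) * Real.arctan (b / c)) := by
  have ha0 : a ≠ 0 := ha.ne'
  have hs : √(4 * a' - 1) = b / a := by
    rw [hb, ← sqrt_div_sq _ ha.le, ha']
    congr 1
    field_simp
    ring
  have ht : √(4 * a' + 1) = c / a := by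
    rw [hc, ← sqrt_div_sq _ ha.le, ha']
    congr 1
    field_simp
    ring
  have h2a' : √(2 * a') = √π / a := by
    rw [← sqrt_div_sq _ ha.le, ha']
    congr 1
    field_simp
  have ha'_gt : (1 / 4 : ℝ) < a' := by
    rw [ha', lt_div_iff₀ (by positivity)]
    linarith
  rw [huqueStensby_exponent_eq ha'_gt hm, exp_add, exp_one_half_mul_log (by linarith), h2a', hs, ht,
    div_div_div_cancel_right₀ ha0, div_div_eq_mul_div]
  field_simp
end
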